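/- For p ∈ [0,1], K ≥ 1, F > 0, and F'(j) = p^j(1-p)^{K-j}F, the function j ↦ δ_IA(j) with δ_IA(j) = C(K-1,j) K F'(j) / max{K_T K/(K_T+K-j), j+1} satisfies δ_IA(j) ≤ C(K-1,j) p^j (1-p)^{K-j} K F / (j+1), and therefore Σ_{j=0}^{K-1} δ_IA(j) ≤ (F/p)·(1-p)·(1 - (1-p)^K) when p > 0. -/

import Mathlib

/-!
Bounding the IA-IC DoF below by `j + 1` bounds each `δ_IA(j)` by a binomial-type term. By the
absorption identity `K * C(K-1, j) = (j+1) * C(K, j+1)` that term equals `(F / p) (1-p)` times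
`C(K, j+1) p^(j+1) (1-p)^(K-(j+1))`, and these probabilities sum to `1 - (1-p)^K`, the binomial
expansion of `(p + (1-p))^K` without its `j = 0` term.
-/

open Finset

theorem sum_range_pow_succ_mul_pow_mul_choose_succ {R : Type*} [CommRing R] (x y : R) (n : ℕ) :
    ∑ j ∈ range n, x ^ (j + 1) * y ^ (n - (j + 1)) * (n.choose (j + 1) : R) =
      (x + y) ^ n - y ^ n := by
  rw [add_pow, sum_range_succ']
  simp

theorem choose_pred_mul_div_succ {n j : ℕ} (hj : j < n) :
    ((n - 1).choose j : ℝ) * n / (j + 1) = n.choose (j + 1) := by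
  obtain ⟨m, rfl⟩ := Nat.exists_eq_add_of_lt hj
  rw [div_eq_iff (by positivity), Nat.add_sub_cancel, mul_comm]
  exact_mod_cast Nat.add_one_mul_choose_eq (j + m) j

theorem choose_pred_mul_pow_mul_div_succ_eq {n j : ℕ} (hj : j < n) {p : ℝ} (hp : p ≠ 0) (q c : ℝ) :
    ((n - 1).choose j : ℝ) * p ^ j * q ^ (n - j) * n * c / (j + 1) =
      c / p * q * (p ^ (j + 1) * q ^ (n - (j + 1)) * n.choose (j + 1)) := by
  rw [← choose_pred_mul_div_succ hj, show n - j = n - (j + 1) + 1 by omega]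
  field_simp
  ring

theorem ia_ndt_bound_general (KT K : ℕ) (p : ℝ) (hp0 : 0 ≤ p)
    (hp1 : p ≤ 1) (F : ℝ) (hF : 0 < F) (F' : ℕ → ℝ)
    (hF' : ∀ j, F' j = p ^ j * (1 - p) ^ (K - j) * F) (δIA : ℕ → ℝ)
    (hδIA : ∀ j, δIA j = (Nat.choose (K - 1) j : ℝ) * K * F' j /
      max ((KT : ℝ) * K / ((KT : ℝ) + K - j)) ((j : ℝ) + 1)) :
    (∀ j : ℕ, j ≤ K - 1 →
      δIA j ≤ (Nat.choose (K - 1) j : ℝ) * p ^ j * (1 - p) ^ (K - j) * K * F / (j + 1)) ∧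
    (0 < p → ∑ j ∈ Finset.range K, δIA j ≤ F / p * (1 - p) * (1 - (1 - p) ^ K)) := by
  have hq : 0 ≤ 1 - p := by linarith
  have hδ_le (j : ℕ) :
      δIA j ≤ (Nat.choose (K - 1) j : ℝ) * p ^ j * (1 - p) ^ (K - j) * K * F / (j + 1) := by
    rw [hδIA, hF']
    calc _ ≤ (Nat.choose (K - 1) j : ℝ) * K * (p ^ j * (1 - p) ^ (K - j) * F) / ((j : ℝ) + 1) :=
          div_le_div_of_nonneg_left (by positivity) (by positivity) (le_max_right _ _)
      _ = _ := by ring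
  refine ⟨fun j _ => hδ_le j, fun hp => ?_⟩
  calc ∑ j ∈ range K, δIA j
      ≤ ∑ j ∈ range K,
          (Nat.choose (K - 1) j : ℝ) * p ^ j * (1 - p) ^ (K - j) * K * F / (j + 1) :=
        sum_le_sum fun j _ => hδ_le j
    _ = F / p * (1 - p) *
          ∑ j ∈ range K, p ^ (j + 1) * (1 - p) ^ (K - (j + 1)) * (K.choose (j + 1) : ℝ) := by
        rw [mul_sum]
        exact sum_congr rfl fun j hj => choose_pred_mul_pow_mul_div_succ_eq (mem_range.1 hj) hp.ne' _ _
    _ = F / p * (1 - p) * (1 - (1 - p) ^ K) := by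
        rw [sum_range_pow_succ_mul_pow_mul_choose_succ, add_sub_cancel, one_pow]

/-- `δ_IA(j) ≤ C(K-1,j) p^j (1-p)^{K-j} K F/(j+1)`, and consequently
`∑_j δ_IA(j) ≤ (F/p)(1-p)(1-(1-p)^K)` when `p > 0`. -/
theorem ia_ndt_bound (KT K : ℕ) (hKT : 1 ≤ KT) (hK : 1 ≤ K) (p : ℝ) (hp0 : 0 ≤ p)
    (hp1 : p ≤ 1) (F : ℝ) (hF : 0 < F) (F' : ℕ → ℝ)
    (hF' : ∀ j, F' j = p ^ j * (1 - p) ^ (K - j) * F) (δIA : ℕ → ℝ)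
    (hδIA : ∀ j, δIA j = (Nat.choose (K - 1) j : ℝ) * K * F' j /
      max ((KT : ℝ) * K / ((KT : ℝ) + K - j)) ((j : ℝ) + 1)) :
    (∀ j : ℕ, j ≤ K - 1 →
      δIA j ≤ (Nat.choose (K - 1) j : ℝ) * p ^ j * (1 - p) ^ (K - j) * K * F / (j + 1)) ∧
    (0 < p → ∑ j ∈ Finset.range K, δIA j ≤ F / p * (1 - p) * (1 - (1 - p) ^ K)) :=
  ia_ndt_bound_general KT K p hp0 hp1 F hF F' hF' δIA hδIA
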